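/- arXiv:1005.2791 — 2 statements merged into one kernel-verified Lean document; each statement's English description precedes it below -/
import Mathlib

section
/- Let n = m² for an even integer m ≥ 4 and let f : 2^[n] → ℝ be defined by f(S) = |S| if |S| < m; f(S) = m if m ≤ |S| ≤ (m² − m)/2; f(S) = m + |S| − (m² − m)/2 if (m² − m)/2 < |S| < (m² + m)/2; and f(S) = 2m if |S| ≥ (m² + m)/2. Then for any S ⊆ [n] with |S| = n/2 one has f(S) = 3m/2 and f(S) − f(S \ {i}) = 1 for every i ∈ S, so Σ_{i ∈ S} (f(S) − f(S \ {i})) = n/2. Consequently, for any fixed a, b ≥ 0, if n/2 > (3a/2)·m + b then f is not (a,b)-self-bounding. -/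
/-!
Self-bounding forces `g i S = g i (S \ {i}) ≤ f (S \ {i})`, so the marginal decrements
`f S - f (S \ {i})`, `i ∈ S`, sum to at most `a f(S) + b`. For `|S| = n/2 = m²/2`, both `S` and
every `S \ {i}` lie in the window where `f` has slope one, so each decrement is `1` and they
sum to `n/2`, while `f S = 3m/2` stays of order `m`.
-/

open Finset

/-- For `a, b ≥ 0`, a set function `f` on `[n]` is `(a,b)`-self-bounding if there
are functions `g i` not depending on the element `i` (i.e. `g i S = g i (S \ {i})`)
such that `0 ≤ f(S) − g i S ≤ 1` for all `S, i` and
`∑ᵢ (f(S) − g i S) ≤ a f(S) + b` for all `S`. -/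
def ABSelfBoundingSet {n : ℕ} (a b : ℝ) (f : Finset (Fin n) → ℝ) : Prop :=
  ∃ g : Fin n → Finset (Fin n) → ℝ,
    (∀ (i : Fin n) (S : Finset (Fin n)), g i S = g i (S.erase i)) ∧
    (∀ (S : Finset (Fin n)) (i : Fin n), 0 ≤ f S - g i S ∧ f S - g i S ≤ 1) ∧
    (∀ S : Finset (Fin n), ∑ i, (f S - g i S) ≤ a * f S + b)

section SelfBounding

variable {n : ℕ} {a b : ℝ} {f : Finset (Fin n) → ℝ}

theorem ABSelfBoundingSet.sum_sub_erase_le (hf : ABSelfBoundingSet a b f)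
    (S : Finset (Fin n)) : ∑ i ∈ S, (f S - f (S.erase i)) ≤ a * f S + b := by
  obtain ⟨g, hg_erase, hg_bound, hg_sum⟩ := hf
  have hterm : ∀ i ∈ S, f S - f (S.erase i) ≤ f S - g i S := fun i _ => by
    linarith [hg_erase i S, (hg_bound (S.erase i) i).1]
  calc ∑ i ∈ S, (f S - f (S.erase i))
      ≤ ∑ i ∈ S, (f S - g i S) := sum_le_sum hterm
    _ ≤ ∑ i, (f S - g i S) :=
        sum_le_sum_of_subset_of_nonneg (subset_univ S) fun i _ _ => (hg_bound S i).1
    _ ≤ a * f S + b := hg_sum S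

end SelfBounding

section UnitSlope

variable {α : Type*} [DecidableEq α] {L U : ℕ} {c : ℝ} {f : Finset α → ℝ}

theorem sub_erase_eq_one_of_card_mem_Ioo
    (hf : ∀ S : Finset α, L < S.card → S.card < U → f S = c + S.card)
    {S : Finset α} (hL : L + 1 < S.card) (hU : S.card < U) {i : α} (hi : i ∈ S) :
    f S - f (S.erase i) = 1 := by
  have hcard : (S.erase i).card + 1 = S.card := card_erase_add_one hi
  rw [hf S (by omega) hU, hf (S.erase i) (by omega) (by omega), ← hcard]
  push_cast
  ring

theorem sum_sub_erase_eq_card_of_card_mem_Ioo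
    (hf : ∀ S : Finset α, L < S.card → S.card < U → f S = c + S.card)
    {S : Finset α} (hL : L + 1 < S.card) (hU : S.card < U) :
    ∑ i ∈ S, (f S - f (S.erase i)) = S.card := by
  rw [sum_congr rfl fun i hi => sub_erase_eq_one_of_card_mem_Ioo hf hL hU hi]
  simp

end UnitSlope

section EvenSquare

variable {m : ℕ}

theorem even_sq_half_window (hm : 4 ≤ m) (hmeven : Even m) :
    (m ^ 2 - m) / 2 + 1 < m ^ 2 / 2 ∧ m ^ 2 / 2 < (m ^ 2 + m) / 2 := by
  obtain ⟨k, rfl⟩ := hmeven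
  have hsq : (k + k) ^ 2 = 4 * (k * k) := by ring
  have hk : 2 * k ≤ k * k := by nlinarith
  omega

theorem even_sq_half_sub_cast (hmeven : Even m) :
    ((m ^ 2 / 2 : ℕ) : ℝ) - (((m ^ 2 - m) / 2 : ℕ) : ℝ) = m / 2 := by
  obtain ⟨k, rfl⟩ := hmeven
  have hsq : (k + k) ^ 2 = 4 * (k * k) := by ring
  have hk : k ≤ k * k := Nat.le_mul_self k
  have hnat : ((k + k) ^ 2 - (k + k)) / 2 + k = (k + k) ^ 2 / 2 := by omega
  rw [← hnat]
  push_cast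
  ring

end EvenSquare

theorem counterexample_not_self_bounding_general
    (m : ℕ) (hm : 4 ≤ m) (hmeven : Even m) (n : ℕ) (hn : n = m ^ 2)
    (f : Finset (Fin n) → ℝ)
    (hf3 : ∀ S : Finset (Fin n), (m ^ 2 - m) / 2 < S.card →
      S.card < (m ^ 2 + m) / 2 →
      f S = (m : ℝ) + S.card - (((m ^ 2 - m) / 2 : ℕ) : ℝ)) :
    (∀ S : Finset (Fin n), S.card = n / 2 →
      f S = 3 * m / 2 ∧
      (∀ i ∈ S, f S - f (S.erase i) = 1) ∧
      ∑ i ∈ S, (f S - f (S.erase i)) = ((n / 2 : ℕ) : ℝ)) ∧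
    (∀ a b : ℝ, 0 ≤ a → 0 ≤ b →
      (3 * a / 2) * m + b < ((n / 2 : ℕ) : ℝ) → ¬ ABSelfBoundingSet a b f) := by
  subst hn
  obtain ⟨hlo, hhi⟩ := even_sq_half_window hm hmeven
  have hslope : ∀ S : Finset (Fin (m ^ 2)), (m ^ 2 - m) / 2 < S.card →
      S.card < (m ^ 2 + m) / 2 → f S = ((m : ℝ) - (((m ^ 2 - m) / 2 : ℕ) : ℝ)) + S.card :=
    fun S h₁ h₂ => by rw [hf3 S h₁ h₂]; ring
  have hmid : ∀ S : Finset (Fin (m ^ 2)), S.card = m ^ 2 / 2 → f S = 3 * m / 2 := by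
    intro S hS
    rw [hf3 S (by omega) (by omega), hS]
    linarith [even_sq_half_sub_cast hmeven]
  have hsum : ∀ S : Finset (Fin (m ^ 2)), S.card = m ^ 2 / 2 →
      ∑ i ∈ S, (f S - f (S.erase i)) = ((m ^ 2 / 2 : ℕ) : ℝ) := fun S hS => by
    rw [sum_sub_erase_eq_card_of_card_mem_Ioo hslope (by omega) (by omega), hS]
  refine ⟨fun S hS => ⟨hmid S hS,
    fun i hi => sub_erase_eq_one_of_card_mem_Ioo hslope (by omega) (by omega) hi,
    hsum S hS⟩, ?_⟩
  rintro a b - - hab hbounding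
  obtain ⟨S, -, hS⟩ := exists_subset_card_eq (s := (univ : Finset (Fin (m ^ 2))))
    (n := m ^ 2 / 2) (by simpa using Nat.div_le_self _ 2)
  have hbound := hbounding.sum_sub_erase_le S
  rw [hsum S hS, hmid S hS] at hbound
  linarith

/-- The paper's subadditive counterexample (for `n = m²`, `m ≥ 4` even) is not
`(a,b)`-self-bounding: for any `S` of cardinality `n/2` one has `f(S) = 3m/2` and
`f(S) − f(S \ {i}) = 1` for every `i ∈ S`, so
`∑_{i ∈ S} (f(S) − f(S \ {i})) = n/2`; hence whenever `n/2 > (3a/2)·m + b` with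
`a, b ≥ 0`, `f` is not `(a,b)`-self-bounding. -/
theorem counterexample_not_self_bounding
    (m : ℕ) (hm : 4 ≤ m) (hmeven : Even m) (n : ℕ) (hn : n = m ^ 2)
    (f : Finset (Fin n) → ℝ)
    (hf1 : ∀ S : Finset (Fin n), S.card < m → f S = S.card)
    (hf2 : ∀ S : Finset (Fin n), m ≤ S.card → S.card ≤ (m ^ 2 - m) / 2 → f S = m)
    (hf3 : ∀ S : Finset (Fin n), (m ^ 2 - m) / 2 < S.card →
      S.card < (m ^ 2 + m) / 2 →
      f S = (m : ℝ) + S.card - (((m ^ 2 - m) / 2 : ℕ) : ℝ))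
    (hf4 : ∀ S : Finset (Fin n), (m ^ 2 + m) / 2 ≤ S.card → f S = 2 * m) :
    (∀ S : Finset (Fin n), S.card = n / 2 →
      f S = 3 * m / 2 ∧
      (∀ i ∈ S, f S - f (S.erase i) = 1) ∧
      ∑ i ∈ S, (f S - f (S.erase i)) = ((n / 2 : ℕ) : ℝ)) ∧
    (∀ a b : ℝ, 0 ≤ a → 0 ≤ b →
      (3 * a / 2) * m + b < ((n / 2 : ℕ) : ℝ) → ¬ ABSelfBoundingSet a b f) :=
  counterexample_not_self_bounding_general m hm hmeven n hn f hf3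
end

section
/- Let X_1,…,X_n ∈ {0,1} be independent random variables and let f : 2^[n] → ℝ be a non-negative subadditive set function with marginal values in [0,1], and set Z = f(X_1,…,X_n). If a is a median of Z (i.e. Pr[Z ≤ a] ≥ 1/2), then for every integer k with 1 ≤ k ≤ n, Pr[Z ≥ 3a + k] ≤ 2^{2−k}. -/
/-!
Talagrand's control by two points on the Boolean cube with a product measure: for lower sets
`C`, `D`, let `h(x)` be the least number of coordinates where `x` is `1` while both `u` and `v`
are `0`, over `u ∈ C`, `v ∈ D`. Then `E[2^h] · P(C) · P(D) ≤ 1`. Splitting off the first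
coordinate, the four ways of matching it (`h` grows by one only when `x₀ = 1` and `u₀ = v₀ = 0`)
and the induction hypothesis reduce the step to an elementary inequality in three variables.

Take `C = D = {f ≤ a}`. Subadditivity and marginals in `[0, 1]` give
`f(x) ≤ f(u) + f(v) + h(x) ≤ 2a + h(x)`, so `f(x) ≥ 3a + k` forces `h(x) ≥ k`, and Markov's
inequality yields `2^k · P(Z ≥ 3a + k) · P(Z ≤ a)² ≤ 1`.
-/

open MeasureTheory ProbabilityTheory Finset

namespace SubadditiveTail

section SetFunction

variable {α : Type*} [DecidableEq α] {f : Finset α → ℝ}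

lemma antitone_sub_card (hlip : ∀ A j, f (insert j A) ≤ f A + 1) :
    Antitone fun A => f A - #A := by
  refine Finset.antitone_iff_forall_insert_le.2 fun A j hj => ?_
  simp only [card_insert_of_notMem hj, Nat.cast_succ]
  linarith [hlip A j]

lemma le_add_add_card_sdiff (hsub : ∀ A B, f (A ∪ B) ≤ f A + f B) (hmono : Monotone f)
    (hlip : ∀ A j, f (insert j A) ≤ f A + 1) (S U V : Finset α) :
    f S ≤ f U + f V + #(S \ (U ∪ V)) := by
  have hcard : (#(S \ (U ∪ V)) : ℝ) + #(U ∪ V) = #(U ∪ V ∪ S) := by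
    rw [union_comm (U ∪ V) S]; exact_mod_cast card_sdiff_add_card S (U ∪ V)
  have := antitone_sub_card hlip (subset_union_left : U ∪ V ⊆ U ∪ V ∪ S)
  have := hmono (subset_union_right : S ⊆ U ∪ V ∪ S)
  linarith [hsub U V]

end SetFunction

lemma mix_mul_mix_sq_le {q s : ℝ} (hq : 0 ≤ q) (hq1 : q ≤ 1) (hs : 1 / 2 ≤ s) (hs1 : s ≤ 1) :
    (s * (1 - q) + q) * (1 - q + q * s) ^ 2 ≤ s := by
  have hd : 0 ≤ 1 - s := by linarith
  have hfactor : 0 ≤ 1 - (2 - q) * (1 - s) := by nlinarith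
  have hgap : s - (s * (1 - q) + q) * (1 - q + q * s) ^ 2
      = q * (1 - s) * ((1 - (2 - q) * (1 - s)) + q * (1 - q) * (1 - s) ^ 2) := by ring
  have : 0 ≤ q * (1 - s) * ((1 - (2 - q) * (1 - s)) + q * (1 - q) * (1 - s) ^ 2) :=
    mul_nonneg (mul_nonneg hq hd)
      (add_nonneg hfactor (mul_nonneg (mul_nonneg hq (sub_nonneg.2 hq1)) (sq_nonneg _)))
  linarith

lemma mix_mul_mix_mul_mix_le_one {p q m s t : ℝ} (hp : 0 ≤ p) (hq : 0 ≤ q) (hpq : p + q = 1)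
    (hm : 0 ≤ m) (hm2 : m ≤ 2) (hs : 0 ≤ s) (hs1 : s ≤ 1) (ht : 0 ≤ t) (ht1 : t ≤ 1)
    (hms : m * s ≤ 1) (hmt : m * t ≤ 1) :
    (p + q * m) * (p + q * s) * (p + q * t) ≤ 1 := by
  wlog hts : t ≤ s generalizing s t
  · linarith [this ht ht1 hs hs1 hmt hms (by linarith)]
  obtain rfl : p = 1 - q := by linarith
  have hm' : 0 ≤ 1 - q + q * m := by positivity
  have hs' : 0 ≤ 1 - q + q * s := by positivity
  have ht' : 0 ≤ 1 - q + q * t := by positivity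
  rcases le_total s (1 / 2) with hsh | hsh
  · have h1 : 1 - q + q * m ≤ 1 + q := by nlinarith
    have h2 : 1 - q + q * s ≤ 1 - q / 2 := by nlinarith
    have h3 : 1 - q + q * t ≤ 1 - q / 2 := by nlinarith
    calc (1 - q + q * m) * (1 - q + q * s) * (1 - q + q * t)
        ≤ (1 + q) * (1 - q / 2) * (1 - q / 2) := by
          have : 0 ≤ 1 - q / 2 := by linarith
          gcongr
      _ ≤ 1 := by nlinarith [mul_nonneg (mul_nonneg hq hq) hp]
  · have h1 : s * (1 - q + q * m) ≤ s * (1 - q) + q := by nlinarith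
    have h3 : 1 - q + q * t ≤ 1 - q + q * s := by nlinarith
    have hpos : 0 < s := by linarith
    refine le_of_mul_le_mul_left ?_ hpos
    calc s * ((1 - q + q * m) * (1 - q + q * s) * (1 - q + q * t))
        = s * (1 - q + q * m) * (1 - q + q * s) * (1 - q + q * t) := by ring
      _ ≤ (s * (1 - q) + q) * (1 - q + q * s) * (1 - q + q * s) := by gcongr
      _ = (s * (1 - q) + q) * (1 - q + q * s) ^ 2 := by ring
      _ ≤ s * 1 := by rw [mul_one]; exact mix_mul_mix_sq_le hq (by linarith) hsh hs1

/-- The induction step of the two-point inequality: `u_b` is the moment over the slice `x₀ = b`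
and `c_b`, `d_b` are the masses of the slices of the two lower sets. Dividing by `c₀ d₀` reduces
it to `mix_mul_mix_mul_mix_le_one`. -/
lemma weighted_mix_mul_mix_mul_mix_le_one {p q u₀ u₁ c₀ c₁ d₀ d₁ : ℝ} (hp : 0 ≤ p) (hq : 0 ≤ q)
    (hpq : p + q = 1) (hu₁ : 0 ≤ u₁) (hc₁ : 0 ≤ c₁) (hd₁ : 0 ≤ d₁)
    (hc : c₁ ≤ c₀) (hd : d₁ ≤ d₀) (h₀ : u₀ * c₀ * d₀ ≤ 1) (h₁ : u₁ * c₀ * d₀ ≤ 2)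
    (hc₁d₀ : u₁ * c₁ * d₀ ≤ 1) (hc₀d₁ : u₁ * c₀ * d₁ ≤ 1) :
    (p * u₀ + q * u₁) * (p * c₀ + q * c₁) * (p * d₀ + q * d₁) ≤ 1 := by
  rcases (hc₁.trans hc).eq_or_lt with hc₀ | hc₀
  · obtain rfl : c₁ = 0 := by linarith
    simp [← hc₀]
  rcases (hd₁.trans hd).eq_or_lt with hd₀ | hd₀
  · obtain rfl : d₁ = 0 := by linarith
    simp [← hd₀]
  have hmix := mix_mul_mix_mul_mix_le_one hp hq hpq (m := u₁ * c₀ * d₀) (by positivity) h₁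
    (s := c₁ / c₀) (t := d₁ / d₀) (by positivity) (div_le_one_of_le₀ hc hc₀.le)
    (by positivity) (div_le_one_of_le₀ hd hd₀.le)
    (by rw [mul_div_assoc', div_le_one hc₀]; nlinarith [mul_le_mul_of_nonneg_left hc₁d₀ hc₀.le])
    (by rw [mul_div_assoc', div_le_one hd₀]; nlinarith [mul_le_mul_of_nonneg_left hc₀d₁ hd₀.le])
  calc (p * u₀ + q * u₁) * (p * c₀ + q * c₁) * (p * d₀ + q * d₁)
      = (p * (u₀ * c₀ * d₀) + q * (u₁ * c₀ * d₀)) * (p + q * (c₁ / c₀)) * (p + q * (d₁ / d₀)) := by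
        field_simp
    _ ≤ (p + q * (u₁ * c₀ * d₀)) * (p + q * (c₁ / c₀)) * (p + q * (d₁ / d₀)) := by
        gcongr
        exact mul_le_of_le_one_right hp h₀
    _ ≤ 1 := hmix

section Cube

variable {n : ℕ}

def trueSet (x : Fin n → Bool) : Finset (Fin n) := {i | x i = true}

lemma trueSet_mono : Monotone (trueSet : (Fin n → Bool) → Finset (Fin n)) := fun x y h i hi => by
  simp only [trueSet, mem_filter, mem_univ, true_and] at hi ⊢
  exact le_antisymm (Bool.le_true _) (hi ▸ h i)

def uncovered (x u v : Fin n → Bool) : ℕ := #(trueSet x \ (trueSet u ∪ trueSet v))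

/-- Since `sInf ∅ = 0` in `ℕ`, this is only meaningful for nonempty `C` and `D`. -/
noncomputable def controlDist (C D : Finset (Fin n → Bool)) (x : Fin n → Bool) : ℕ :=
  sInf (Set.image2 (uncovered x) C D)

def cubeWeight (p : Fin n → Bool → ℝ) (x : Fin n → Bool) : ℝ := ∏ i, p i (x i)

def cubeMeasure (p : Fin n → Bool → ℝ) (C : Finset (Fin n → Bool)) : ℝ := ∑ x ∈ C, cubeWeight p x

noncomputable def controlMoment (p : Fin n → Bool → ℝ) (C D : Finset (Fin n → Bool)) : ℝ :=
  ∑ x, cubeWeight p x * 2 ^ controlDist C D x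

lemma controlDist_le {C D : Finset (Fin n → Bool)} {u v : Fin n → Bool} (hu : u ∈ C) (hv : v ∈ D)
    (x : Fin n → Bool) : controlDist C D x ≤ uncovered x u v :=
  Nat.sInf_le (Set.mem_image2_of_mem hu hv)

lemma exists_uncovered_eq_controlDist {C D : Finset (Fin n → Bool)} (hC : C.Nonempty)
    (hD : D.Nonempty) (x : Fin n → Bool) :
    ∃ u ∈ C, ∃ v ∈ D, uncovered x u v = controlDist C D x :=
  Nat.sInf_mem (Set.Nonempty.image2 hC hD)

variable {p : Fin n → Bool → ℝ}

lemma cubeWeight_nonneg (hp : ∀ i b, 0 ≤ p i b) (x : Fin n → Bool) : 0 ≤ cubeWeight p x :=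
  prod_nonneg fun i _ => hp i (x i)

lemma cubeMeasure_nonneg (hp : ∀ i b, 0 ≤ p i b) (C : Finset (Fin n → Bool)) :
    0 ≤ cubeMeasure p C :=
  sum_nonneg fun x _ => cubeWeight_nonneg hp x

lemma cubeMeasure_mono (hp : ∀ i b, 0 ≤ p i b) {C D : Finset (Fin n → Bool)} (h : C ⊆ D) :
    cubeMeasure p C ≤ cubeMeasure p D :=
  sum_le_sum_of_subset_of_nonneg h fun x _ _ => cubeWeight_nonneg hp x

lemma cubeMeasure_univ (hp : ∀ i, ∑ b, p i b = 1) : cubeMeasure p univ = 1 := by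
  simp only [cubeMeasure, cubeWeight, ← Fintype.prod_sum, hp, prod_const_one]

lemma cubeMeasure_le_one (hp₀ : ∀ i b, 0 ≤ p i b) (hp₁ : ∀ i, ∑ b, p i b = 1)
    (C : Finset (Fin n → Bool)) : cubeMeasure p C ≤ 1 :=
  cubeMeasure_univ hp₁ ▸ cubeMeasure_mono hp₀ (subset_univ C)

lemma pow_mul_cubeMeasure_le_controlMoment (hp : ∀ i b, 0 ≤ p i b)
    {B C D : Finset (Fin n → Bool)} {k : ℕ} (hk : ∀ x ∈ B, k ≤ controlDist C D x) :
    2 ^ k * cubeMeasure p B ≤ controlMoment p C D := by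
  rw [cubeMeasure, mul_sum]
  calc ∑ x ∈ B, 2 ^ k * cubeWeight p x
      ≤ ∑ x ∈ B, cubeWeight p x * 2 ^ controlDist C D x := by
        refine sum_le_sum fun x hx => ?_
        rw [mul_comm]
        exact mul_le_mul_of_nonneg_left (pow_le_pow_right₀ one_le_two (hk x hx))
          (cubeWeight_nonneg hp x)
    _ ≤ controlMoment p C D :=
        sum_le_sum_of_subset_of_nonneg (subset_univ B) fun x _ _ =>
          mul_nonneg (cubeWeight_nonneg hp x) (by positivity)

lemma sum_fin_succ_pi {β M : Type*} [Fintype β] [AddCommMonoid M]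
    (F : (Fin (n + 1) → β) → M) : ∑ x, F x = ∑ b, ∑ y, F (Fin.cons b y) := by
  rw [← (Fin.consEquiv fun _ => β).sum_comp, Fintype.sum_prod_type]
  rfl

lemma cubeWeight_cons (p : Fin (n + 1) → Bool → ℝ) (b : Bool) (y : Fin n → Bool) :
    cubeWeight p (Fin.cons b y) = p 0 b * cubeWeight (Fin.tail p) y := by
  simp [cubeWeight, Fin.prod_univ_succ, Fin.tail]

def slice (b : Bool) (C : Finset (Fin (n + 1) → Bool)) : Finset (Fin n → Bool) :=
  {y | Fin.cons b y ∈ C}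

lemma mem_slice {b : Bool} {C : Finset (Fin (n + 1) → Bool)} {y : Fin n → Bool} :
    y ∈ slice b C ↔ Fin.cons b y ∈ C := by
  simp [slice]

lemma cubeMeasure_eq_sum_slice (p : Fin (n + 1) → Bool → ℝ) (C : Finset (Fin (n + 1) → Bool)) :
    cubeMeasure p C = ∑ b, p 0 b * cubeMeasure (Fin.tail p) (slice b C) := by
  calc cubeMeasure p C = ∑ x, if x ∈ C then cubeWeight p x else 0 := by
        rw [sum_ite_mem, univ_inter, cubeMeasure]
    _ = ∑ b, p 0 b * cubeMeasure (Fin.tail p) (slice b C) := by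
        rw [sum_fin_succ_pi]
        simp only [cubeMeasure, slice, sum_filter, mul_sum, cubeWeight_cons, mul_ite, mul_zero]

lemma controlMoment_eq_sum_cons (p : Fin (n + 1) → Bool → ℝ) (C D : Finset (Fin (n + 1) → Bool)) :
    controlMoment p C D =
      ∑ b, p 0 b * ∑ y, cubeWeight (Fin.tail p) y * 2 ^ controlDist C D (Fin.cons b y) := by
  simp only [controlMoment, sum_fin_succ_pi fun x => cubeWeight p x * _, cubeWeight_cons, mul_sum,
    mul_assoc]

lemma uncovered_eq_card_filter (x u v : Fin n → Bool) :
    uncovered x u v = #{i | (x i && !u i && !v i) = true} := by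
  simp only [uncovered, trueSet]
  congr 1
  ext i
  simp [and_assoc]

lemma uncovered_cons (b c d : Bool) (y u v : Fin n → Bool) :
    uncovered (Fin.cons b y) (Fin.cons c u) (Fin.cons d v) =
      (b && !c && !d).toNat + uncovered y u v := by
  simp only [uncovered_eq_card_filter, card_filter, Fin.sum_univ_succ, Fin.cons_zero,
    Fin.cons_succ]
  cases b <;> cases c <;> cases d <;> simp

lemma controlDist_cons_le {C D : Finset (Fin (n + 1) → Bool)} {c d : Bool}
    (hC : (slice c C).Nonempty) (hD : (slice d D).Nonempty) (b : Bool) (y : Fin n → Bool) :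
    controlDist C D (Fin.cons b y) ≤
      (b && !c && !d).toNat + controlDist (slice c C) (slice d D) y := by
  obtain ⟨u, hu, v, hv, huv⟩ := exists_uncovered_eq_controlDist hC hD y
  rw [← huv, ← uncovered_cons]
  exact controlDist_le (mem_slice.1 hu) (mem_slice.1 hv) _

lemma isLowerSet_slice {C : Finset (Fin (n + 1) → Bool)}
    (hC : IsLowerSet (C : Set (Fin (n + 1) → Bool))) (b : Bool) :
    IsLowerSet (slice b C : Set (Fin n → Bool)) := fun _ _ hle hy =>
  mem_slice.2 (hC (Fin.cons_le_cons.2 ⟨le_rfl, hle⟩) (mem_slice.1 hy))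

lemma slice_true_subset_slice_false {C : Finset (Fin (n + 1) → Bool)}
    (hC : IsLowerSet (C : Set (Fin (n + 1) → Bool))) :
    slice true C ⊆ slice false C := fun _ hy =>
  mem_slice.2 (hC (Fin.cons_le_cons.2 ⟨Bool.false_le _, le_rfl⟩) (mem_slice.1 hy))

lemma sum_cons_mul_cubeMeasure_slice_le {p : Fin (n + 1) → Bool → ℝ} (hp : ∀ i b, 0 ≤ p i b)
    (ih : ∀ C D : Finset (Fin n → Bool), IsLowerSet (C : Set (Fin n → Bool)) →
      IsLowerSet (D : Set (Fin n → Bool)) →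
      controlMoment (Fin.tail p) C D * cubeMeasure (Fin.tail p) C * cubeMeasure (Fin.tail p) D ≤ 1)
    {C D : Finset (Fin (n + 1) → Bool)} (hC : IsLowerSet (C : Set (Fin (n + 1) → Bool)))
    (hD : IsLowerSet (D : Set (Fin (n + 1) → Bool))) (b c d : Bool) :
    (∑ y, cubeWeight (Fin.tail p) y * 2 ^ controlDist C D (Fin.cons b y)) *
      cubeMeasure (Fin.tail p) (slice c C) * cubeMeasure (Fin.tail p) (slice d D) ≤
      2 ^ (b && !c && !d).toNat := by
  have hp' : ∀ i b, 0 ≤ Fin.tail p i b := fun i => hp i.succ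
  rcases (slice c C).eq_empty_or_nonempty with hCc | hCc
  · simp [hCc, cubeMeasure]
  rcases (slice d D).eq_empty_or_nonempty with hDd | hDd
  · simp [hDd, cubeMeasure]
  have hsum : ∑ y, cubeWeight (Fin.tail p) y * 2 ^ controlDist C D (Fin.cons b y) ≤
      2 ^ (b && !c && !d).toNat * controlMoment (Fin.tail p) (slice c C) (slice d D) := by
    rw [controlMoment, mul_sum]
    refine sum_le_sum fun y _ => ?_
    rw [mul_left_comm, ← pow_add]
    exact mul_le_mul_of_nonneg_left (pow_le_pow_right₀ one_le_two (controlDist_cons_le hCc hDd b y))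
      (cubeWeight_nonneg hp' y)
  calc _ ≤ 2 ^ (b && !c && !d).toNat * controlMoment (Fin.tail p) (slice c C) (slice d D) *
        cubeMeasure (Fin.tail p) (slice c C) * cubeMeasure (Fin.tail p) (slice d D) := by
        gcongr
        · exact cubeMeasure_nonneg hp' _
        · exact cubeMeasure_nonneg hp' _
    _ ≤ 2 ^ (b && !c && !d).toNat * 1 := by
        simp only [mul_assoc]
        gcongr
        simpa only [mul_assoc] using ih _ _ (isLowerSet_slice hC c) (isLowerSet_slice hD d)
    _ = _ := mul_one _

theorem controlMoment_mul_cubeMeasure_mul_le_one {p : Fin n → Bool → ℝ}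
    (hp₀ : ∀ i b, 0 ≤ p i b) (hp₁ : ∀ i, ∑ b, p i b = 1) {C D : Finset (Fin n → Bool)}
    (hC : IsLowerSet (C : Set (Fin n → Bool))) (hD : IsLowerSet (D : Set (Fin n → Bool))) :
    controlMoment p C D * cubeMeasure p C * cubeMeasure p D ≤ 1 := by
  induction n with
  | zero =>
    rcases C.eq_empty_or_nonempty with rfl | ⟨u, hu⟩
    · simp [cubeMeasure]
    rcases D.eq_empty_or_nonempty with rfl | ⟨v, hv⟩
    · simp [cubeMeasure]
    have hdist : ∀ x, controlDist C D x = 0 := fun x =>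
      Nat.eq_zero_of_le_zero <| (controlDist_le hu hv x).trans <|
        (card_le_univ _).trans_eq (Fintype.card_fin 0)
    have hmoment : controlMoment p C D = 1 := by
      simp only [controlMoment, hdist, pow_zero, mul_one]
      exact cubeMeasure_univ hp₁
    rw [hmoment, one_mul]
    exact mul_le_one₀ (cubeMeasure_le_one hp₀ hp₁ C) (cubeMeasure_nonneg hp₀ D)
      (cubeMeasure_le_one hp₀ hp₁ D)
  | succ n ih =>
    have hp' : ∀ i b, 0 ≤ Fin.tail p i b := fun i => hp₀ i.succ
    have key := sum_cons_mul_cubeMeasure_slice_le hp₀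
      (fun _ _ => ih hp' fun i => hp₁ i.succ) hC hD
    have hU : ∀ b, 0 ≤ ∑ y, cubeWeight (Fin.tail p) y * 2 ^ controlDist C D (Fin.cons b y) :=
      fun b => sum_nonneg fun y _ => mul_nonneg (cubeWeight_nonneg hp' y) (by positivity)
    have := weighted_mix_mul_mix_mul_mix_le_one (hp₀ 0 false) (hp₀ 0 true)
      (by simpa [add_comm] using hp₁ 0) (hU true)
      (cubeMeasure_nonneg hp' _) (cubeMeasure_nonneg hp' _)
      (cubeMeasure_mono hp' (slice_true_subset_slice_false hC))
      (cubeMeasure_mono hp' (slice_true_subset_slice_false hD))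
      (by simpa using key false false false) (by simpa using key true false false)
      (by simpa using key true true false) (by simpa using key true false true)
    rw [controlMoment_eq_sum_cons, cubeMeasure_eq_sum_slice, cubeMeasure_eq_sum_slice]
    simp only [Fintype.sum_bool]
    linarith

end Cube

section Independence

variable {Ω : Type*} [MeasurableSpace Ω] {μ : Measure Ω} [IsProbabilityMeasure μ] {n : ℕ}
  {X : Fin n → Ω → Bool}

lemma sum_measureReal_preimage_bool (hX : ∀ i, Measurable (X i)) (i : Fin n) :
    ∑ b, μ.real (X i ⁻¹' {b}) = 1 := by
  rw [sum_measureReal_preimage_singleton _ fun b _ => hX i (measurableSet_singleton b),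
    coe_univ, Set.preimage_univ, probReal_univ]

lemma measureReal_preimage_eq_cubeMeasure (hX : ∀ i, Measurable (X i)) (hind : iIndepFun X μ)
    (S : Finset (Fin n → Bool)) :
    μ.real ((fun ω i => X i ω) ⁻¹' S) = cubeMeasure (fun i b => μ.real (X i ⁻¹' {b})) S := by
  have hXm : Measurable fun ω i => X i ω := measurable_pi_iff.2 hX
  rw [← sum_measureReal_preimage_singleton _ fun x _ => hXm (measurableSet_singleton x)]
  refine sum_congr rfl fun x _ => ?_
  have hpre : (fun ω i => X i ω) ⁻¹' {x} = ⋂ i ∈ univ, X i ⁻¹' {x i} := by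
    ext ω
    simp [funext_iff]
  rw [hpre, measureReal_def, hind.measure_inter_preimage_eq_mul _ fun i _ =>
    measurableSet_singleton (x i), ENNReal.toReal_prod]
  rfl

end Independence

lemma pow_mul_cubeMeasure_superlevel_mul_sq_le_one {n : ℕ} {p : Fin n → Bool → ℝ}
    (hp₀ : ∀ i b, 0 ≤ p i b) (hp₁ : ∀ i, ∑ b, p i b = 1) {f : Finset (Fin n) → ℝ}
    (hf : ∀ A, 0 ≤ f A) (hsub : ∀ A B, f (A ∪ B) ≤ f A + f B) (hmono : Monotone f)
    (hlip : ∀ A j, f (insert j A) ≤ f A + 1) (a : ℝ) (k : ℕ) :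
    2 ^ k * cubeMeasure p {x | 3 * a + k ≤ f (trueSet x)} *
      cubeMeasure p {x | f (trueSet x) ≤ a} ^ 2 ≤ 1 := by
  set A : Finset (Fin n → Bool) := {x | f (trueSet x) ≤ a}
  rcases A.eq_empty_or_nonempty with hA | hA
  · simp [hA, cubeMeasure]
  have hAlow : IsLowerSet (A : Set (Fin n → Bool)) := fun x y hyx hx => by
    simp only [A, coe_filter, mem_univ, true_and] at hx ⊢
    exact (hmono (trueSet_mono hyx)).trans hx
  have hdist : ∀ x ∈ ({x | 3 * a + k ≤ f (trueSet x)} : Finset (Fin n → Bool)),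
      k ≤ controlDist A A x := fun x hx => by
    obtain ⟨u, hu, v, hv, huv⟩ := exists_uncovered_eq_controlDist hA hA x
    simp only [A, mem_filter, mem_univ, true_and] at hx hu hv
    have := le_add_add_card_sdiff hsub hmono hlip (trueSet x) (trueSet u) (trueSet v)
    have : (k : ℝ) ≤ uncovered x u v := by
      rw [uncovered]
      linarith [hf (trueSet u)]
    rw [← huv]
    exact_mod_cast this
  calc _ ≤ controlMoment p A A * cubeMeasure p A * cubeMeasure p A := by
        have := pow_mul_cubeMeasure_le_controlMoment hp₀ hdist
        have := cubeMeasure_nonneg hp₀ A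
        rw [sq, ← mul_assoc]
        gcongr
    _ ≤ 1 := controlMoment_mul_cubeMeasure_mul_le_one hp₀ hp₁ hAlow hAlow

end SubadditiveTail

open SubadditiveTail

theorem subadditive_median_tail_general
    {Ω : Type*} [MeasurableSpace Ω] (μ : Measure Ω) [IsProbabilityMeasure μ]
    {n : ℕ} (X : Fin n → Ω → Bool) (hXm : ∀ i, Measurable (X i))
    (hXind : iIndepFun X μ)
    (f : Finset (Fin n) → ℝ)
    (hnonneg : ∀ A : Finset (Fin n), 0 ≤ f A)
    (hsub : ∀ A B : Finset (Fin n), f (A ∪ B) ≤ f A + f B)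
    (hmarg : ∀ (A : Finset (Fin n)) (j : Fin n),
      0 ≤ f (insert j A) - f A ∧ f (insert j A) - f A ≤ 1)
    (Z : Ω → ℝ) (hZ : ∀ ω, Z ω = f (univ.filter fun i => X i ω = true))
    (a : ℝ) (hmed : (1 : ℝ) / 2 ≤ (μ {ω | Z ω ≤ a}).toReal)
    (k : ℕ) :
    (μ {ω | 3 * a + k ≤ Z ω}).toReal ≤ (2 : ℝ) ^ ((2 : ℤ) - k) := by
  have hmono : Monotone f :=
    Finset.monotone_iff_forall_le_insert.2 fun A j _ => by linarith [hmarg A j]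
  have hlaw : ∀ (P : ℝ → Prop) [DecidablePred P], (μ {ω | P (Z ω)}).toReal =
      cubeMeasure (fun i b => μ.real (X i ⁻¹' {b})) {x | P (f (trueSet x))} := fun P _ => by
    rw [← measureReal_preimage_eq_cubeMeasure hXm hXind, measureReal_def]
    congr 2
    ext ω
    rw [Set.mem_preimage, mem_coe, mem_filter]
    exact iff_of_eq (congrArg P (hZ ω)) |>.trans (and_iff_right (mem_univ _)).symm
  have htail := pow_mul_cubeMeasure_superlevel_mul_sq_le_one
    (fun _ _ => measureReal_nonneg (μ := μ)) (sum_measureReal_preimage_bool hXm) hnonneg hsub hmono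
    (fun A j => by linarith [hmarg A j]) a k
  rw [← hlaw (3 * a + k ≤ ·), ← hlaw (· ≤ a)] at htail
  have hmed_sq : (1 : ℝ) / 4 ≤ (μ {ω | Z ω ≤ a}).toReal ^ 2 := by nlinarith
  have htail_nonneg : (0 : ℝ) ≤ 2 ^ k * (μ {ω | 3 * a + k ≤ Z ω}).toReal := by positivity
  rw [zpow_sub₀ two_ne_zero, zpow_natCast, le_div_iff₀ (by positivity)]
  nlinarith [mul_le_mul_of_nonneg_left hmed_sq htail_nonneg]

/-- Consequence of Schechtman's inequality with `q = 2`: if `f` is a non-negative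
subadditive set function with marginal values in `[0,1]`, `Z = f(X₁,…,Xₙ)` for
independent `{0,1}`-valued random variables, and `a` is a median of `Z`
(i.e. `Pr[Z ≤ a] ≥ 1/2`), then `Pr[Z ≥ 3a + k] ≤ 2^{2−k}` for every integer
`1 ≤ k ≤ n`. -/
theorem subadditive_median_tail
    {Ω : Type*} [MeasurableSpace Ω] (μ : Measure Ω) [IsProbabilityMeasure μ]
    {n : ℕ} (X : Fin n → Ω → Bool) (hXm : ∀ i, Measurable (X i))
    (hXind : iIndepFun X μ)
    (f : Finset (Fin n) → ℝ)
    (hnonneg : ∀ A : Finset (Fin n), 0 ≤ f A)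
    (hsub : ∀ A B : Finset (Fin n), f (A ∪ B) ≤ f A + f B)
    (hmarg : ∀ (A : Finset (Fin n)) (j : Fin n),
      0 ≤ f (insert j A) - f A ∧ f (insert j A) - f A ≤ 1)
    (Z : Ω → ℝ) (hZ : ∀ ω, Z ω = f (univ.filter fun i => X i ω = true))
    (a : ℝ) (hmed : (1 : ℝ) / 2 ≤ (μ {ω | Z ω ≤ a}).toReal)
    (k : ℕ) (hk1 : 1 ≤ k) (hkn : k ≤ n) :
    (μ {ω | 3 * a + k ≤ Z ω}).toReal ≤ (2 : ℝ) ^ ((2 : ℤ) - k) :=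
  subadditive_median_tail_general μ X hXm hXind f hnonneg hsub hmarg Z hZ a hmed k
end
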